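/- Let k be an algebraically closed complete non-Archimedean field, f : O(0,1) → O(0,1) a finite surjective étale analytic map with f(0) = 0 and zero set Z = {β_0 = 0, β_1, …, β_n} (all simple zeros). For x = 0 and t ∈ (0,∞), define B(t) := {z ∈ Z : |z| ≤ exp(−t)} (zeros whose path to the skeleton merges with the path from 0 by time −log corresponding to radius exp(−t), here simply zeros in the closed ball of radius exp(−t)). Then card B(t) equals the slope d of the profile function f_0 at t, and ∑_{z ∈ B(t), z ≠ 0} (−log|z|) equals the total drop of the intercept: if f_0(s) = d s + α on the piece containing t and f_0(s) = s + α_max wholly near s = ∞ (slope 1, α_max = ∑_{z ∈ Z, z≠0}(−log|z|)), then α = α_max − ∑_{z ∈ B(t), z ≠ 0} (−log|z|). -/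

import Mathlib

/-
Write `f = (∏ i, (X - β i)) * u` with `u` a power series without zeros on the open unit disk.
Such a `u` has constant norm `‖u 0‖`: if some term `‖u_m‖ ‖ρ‖^m` beat the constant one, the
truncations of `u(ρ x)` would, for large degree, have a bounded number of roots in the closed
unit disk, each close to a root of the next truncation; these roots form a Cauchy sequence whose
limit is a zero of `u`. Since `f` maps the disk onto itself, `‖u‖ = 1`, so by the ultrametric
inequality `‖f a‖ = ∏ i, max ‖a‖ ‖β i‖` whenever `‖a‖` avoids the `‖β i‖`. Hence, for `‖a‖`
just above a radius `r`, `-log ‖f a‖` is affine in `s = -log ‖a‖` with slope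
`#{i | ‖β i‖ ≤ r}` and intercept `∑_{‖β i‖ > r} -log ‖β i‖`. Norms are dense because `k` is
algebraically closed, so comparing with the given affine pieces at `r = exp (-t)` and as `r → 0`
determines slope and intercepts.
-/

/-- A finite surjective analytic self-map of the open unit disk `O(0,1)` over `k`. -/
structure AnalyticDiskMap (k : Type*) [NontriviallyNormedField k] where
  toFun : k → k
  coeff : ℕ → k
  hasSum_eval : ∀ a : k, ‖a‖ < 1 → HasSum (fun n => coeff n * a ^ n) (toFun a)
  maps_disk : ∀ a : k, ‖a‖ < 1 → ‖toFun a‖ < 1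
  map_zero : toFun 0 = 0
  surj : ∀ b : k, ‖b‖ < 1 → ∃ a : k, ‖a‖ < 1 ∧ toFun a = b
  finite_fibers : ∀ b : k, ‖b‖ < 1 → Set.Finite {a : k | ‖a‖ < 1 ∧ toFun a = b}

open Polynomial Filter Topology

namespace IsUltrametricDist

variable {S : Type*} [SeminormedAddGroup S] [IsUltrametricDist S]

lemma norm_sub_le_max (x y : S) : ‖x - y‖ ≤ max ‖x‖ ‖y‖ := by
  simpa only [sub_eq_add_neg, norm_neg] using norm_add_le_max x (-y)

lemma norm_sub_eq_max_of_norm_ne_norm {x y : S} (h : ‖x‖ ≠ ‖y‖) : ‖x - y‖ = max ‖x‖ ‖y‖ := by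
  rw [sub_eq_add_neg, norm_add_eq_max_of_norm_ne_norm (by rwa [norm_neg]), norm_neg]

lemma norm_sub_eq_left_of_lt {x y : S} (h : ‖y‖ < ‖x‖) : ‖x - y‖ = ‖x‖ := by
  rw [norm_sub_eq_max_of_norm_ne_norm h.ne', max_eq_left h.le]

lemma norm_sub_lt_of_lt_of_lt {x y : S} {C : ℝ} (hx : ‖x‖ < C) (hy : ‖y‖ < C) : ‖x - y‖ < C :=
  (norm_sub_le_max x y).trans_lt (max_lt hx hy)

lemma norm_sum_lt_of_forall_lt {M ι : Type*} [SeminormedAddCommGroup M] [IsUltrametricDist M]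
    {s : Finset ι} {f : ι → M} {C : ℝ} (hC : 0 < C) (h : ∀ i ∈ s, ‖f i‖ < C) :
    ‖∑ i ∈ s, f i‖ < C := by
  rcases s.eq_empty_or_nonempty with rfl | hs
  · simpa using hC
  · exact (hs.norm_sum_le_sup'_norm f).trans_lt ((Finset.sup'_lt_iff hs).2 h)

end IsUltrametricDist

open IsUltrametricDist

section RootsInDisk

variable {k : Type*} [NormedField k]

namespace Polynomial

/-- `O` is the Gauss norm `⨆ j, ‖Q.coeff j‖` of `Q` and `K` the last index attaining it. -/
structure DominantCoeff (Q : k[X]) (K : ℕ) (O : ℝ) : Prop where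
  norm_coeff_le : ∀ j, ‖Q.coeff j‖ ≤ O
  norm_coeff_eq : ‖Q.coeff K‖ = O
  norm_coeff_lt : ∀ j, K < j → ‖Q.coeff j‖ < O

lemma dominantCoeff_one : (1 : k[X]).DominantCoeff 0 1 :=
  ⟨fun j => by rw [coeff_one]; split_ifs <;> simp, by simp,
    fun j hj => by simp [coeff_one, hj.ne']⟩

lemma norm_coeff_zero_X_sub_C_mul (Q : k[X]) (z : k) :
    ‖((X - C z) * Q).coeff 0‖ = ‖Q.coeff 0‖ * ‖z‖ := by
  simp [mul_coeff_zero, mul_comm]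

lemma coeff_succ_X_sub_C_mul (Q : k[X]) (z : k) (j : ℕ) :
    ((X - C z) * Q).coeff (j + 1) = Q.coeff j - Q.coeff (j + 1) * z := by
  rw [mul_comm, coeff_mul_X_sub_C]

variable [IsUltrametricDist k]

lemma DominantCoeff.X_sub_C_mul_of_norm_le_one {Q : k[X]} {K : ℕ} {O : ℝ}
    (h : Q.DominantCoeff K O) {z : k} (hz : ‖z‖ ≤ 1) :
    ((X - C z) * Q).DominantCoeff (K + 1) O := by
  have hmul : ∀ j, ‖Q.coeff j * z‖ ≤ ‖Q.coeff j‖ := fun j => by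
    rw [norm_mul]; exact mul_le_of_le_one_right (norm_nonneg _) hz
  refine ⟨fun j => ?_, ?_, fun j hj => ?_⟩
  · cases j with
    | zero =>
      rw [norm_coeff_zero_X_sub_C_mul, ← norm_mul]
      exact (hmul 0).trans (h.norm_coeff_le 0)
    | succ j =>
      rw [coeff_succ_X_sub_C_mul]
      exact (norm_sub_le_max _ _).trans
        (max_le (h.norm_coeff_le j) ((hmul _).trans (h.norm_coeff_le _)))
  · rw [coeff_succ_X_sub_C_mul, norm_sub_eq_left_of_lt, h.norm_coeff_eq]
    rw [h.norm_coeff_eq]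
    exact (hmul _).trans_lt (h.norm_coeff_lt _ K.lt_succ_self)
  · obtain ⟨j, rfl⟩ : ∃ i, j = i + 1 := ⟨j - 1, by omega⟩
    rw [coeff_succ_X_sub_C_mul]
    exact norm_sub_lt_of_lt_of_lt (h.norm_coeff_lt _ (by omega))
      ((hmul _).trans_lt (h.norm_coeff_lt _ (by omega)))

lemma DominantCoeff.X_sub_C_mul_of_one_lt {Q : k[X]} {K : ℕ} {O : ℝ}
    (h : Q.DominantCoeff K O) (hO : 0 < O) {z : k} (hz : 1 < ‖z‖) :
    ((X - C z) * Q).DominantCoeff K (‖z‖ * O) := by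
  have hlt : ∀ j, ‖Q.coeff j‖ < ‖z‖ * O := fun j =>
    (h.norm_coeff_le j).trans_lt (lt_mul_of_one_lt_left hO hz)
  have hmul : ∀ j, ‖Q.coeff j * z‖ = ‖z‖ * ‖Q.coeff j‖ := fun j => by rw [norm_mul, mul_comm]
  refine ⟨fun j => ?_, ?_, fun j hj => ?_⟩
  · cases j with
    | zero =>
      rw [norm_coeff_zero_X_sub_C_mul, mul_comm]
      exact mul_le_mul_of_nonneg_left (h.norm_coeff_le 0) (norm_nonneg _)
    | succ j =>
      rw [coeff_succ_X_sub_C_mul]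
      exact (norm_sub_le_max _ _).trans (max_le (hlt j).le
        (hmul _ ▸ mul_le_mul_of_nonneg_left (h.norm_coeff_le _) (norm_nonneg _)))
  · cases K with
    | zero => rw [norm_coeff_zero_X_sub_C_mul, mul_comm, h.norm_coeff_eq]
    | succ i =>
      rw [coeff_succ_X_sub_C_mul, norm_sub_rev, norm_sub_eq_left_of_lt, hmul, h.norm_coeff_eq]
      rw [hmul, h.norm_coeff_eq]
      exact hlt i
  · obtain ⟨j, rfl⟩ : ∃ i, j = i + 1 := ⟨j - 1, by omega⟩
    rw [coeff_succ_X_sub_C_mul]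
    refine norm_sub_lt_of_lt_of_lt (hlt j) ?_
    rw [hmul]
    exact mul_lt_mul_of_pos_left (h.norm_coeff_lt _ hj) (one_pos.trans hz)

end Polynomial

namespace Multiset

noncomputable def diskPart (s : Multiset k) : Multiset k := s.filter fun z => ‖z‖ ≤ 1

noncomputable def outsideNormProd (s : Multiset k) : ℝ :=
  ((s.filter fun z => 1 < ‖z‖).map (‖·‖)).prod

lemma one_le_outsideNormProd (s : Multiset k) : 1 ≤ s.outsideNormProd :=
  one_le_prod_map fun _ hz => (mem_filter.1 hz).2.le

@[simp] lemma diskPart_zero : diskPart (0 : Multiset k) = 0 := filter_zero _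

@[simp] lemma outsideNormProd_zero : outsideNormProd (0 : Multiset k) = 1 := by
  simp [outsideNormProd]

lemma diskPart_cons_of_norm_le {z : k} (s : Multiset k) (hz : ‖z‖ ≤ 1) :
    (z ::ₘ s).diskPart = z ::ₘ s.diskPart :=
  filter_cons_of_pos _ hz

lemma diskPart_cons_of_one_lt {z : k} (s : Multiset k) (hz : 1 < ‖z‖) :
    (z ::ₘ s).diskPart = s.diskPart :=
  filter_cons_of_neg _ hz.not_ge

lemma outsideNormProd_cons_of_norm_le {z : k} (s : Multiset k) (hz : ‖z‖ ≤ 1) :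
    (z ::ₘ s).outsideNormProd = s.outsideNormProd := by
  rw [outsideNormProd, filter_cons_of_neg (p := fun z : k => 1 < ‖z‖) _ hz.not_gt,
    outsideNormProd]

lemma outsideNormProd_cons_of_one_lt {z : k} (s : Multiset k) (hz : 1 < ‖z‖) :
    (z ::ₘ s).outsideNormProd = ‖z‖ * s.outsideNormProd := by
  rw [outsideNormProd, filter_cons_of_pos (p := fun z : k => 1 < ‖z‖) _ hz, map_cons, prod_cons,
    outsideNormProd]

variable [IsUltrametricDist k]

theorem dominantCoeff_prod_X_sub_C (s : Multiset k) :
    ((s.map (X - C ·)).prod).DominantCoeff (card s.diskPart) s.outsideNormProd := by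
  induction s using Multiset.induction_on with
  | empty => simpa using dominantCoeff_one
  | cons z s ih =>
    rw [map_cons, prod_cons]
    rcases le_or_gt ‖z‖ 1 with hz | hz
    · rw [diskPart_cons_of_norm_le s hz, card_cons, outsideNormProd_cons_of_norm_le s hz]
      exact ih.X_sub_C_mul_of_norm_le_one hz
    · rw [diskPart_cons_of_one_lt s hz, outsideNormProd_cons_of_one_lt s hz]
      exact ih.X_sub_C_mul_of_one_lt (one_pos.trans_le s.one_le_outsideNormProd) hz

theorem norm_eval_prod_X_sub_C (s : Multiset k) {w : k} (hw : ‖w‖ ≤ 1) :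
    ‖((s.map (X - C ·)).prod).eval w‖ = s.outsideNormProd * (s.diskPart.map (‖w - ·‖)).prod := by
  induction s using Multiset.induction_on with
  | empty => simp
  | cons z s ih =>
    rw [map_cons, prod_cons, eval_mul, norm_mul, ih, eval_sub, eval_X, eval_C]
    rcases le_or_gt ‖z‖ 1 with hz | hz
    · rw [diskPart_cons_of_norm_le s hz, outsideNormProd_cons_of_norm_le s hz, map_cons,
        prod_cons]
      ring
    · rw [diskPart_cons_of_one_lt s hz, outsideNormProd_cons_of_one_lt s hz, norm_sub_rev,
        norm_sub_eq_left_of_lt (hw.trans_lt hz)]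
      ring

end Multiset

namespace Polynomial

variable [IsAlgClosed k]

lemma norm_coeff_eq_norm_leadingCoeff_mul (P : k[X]) (j : ℕ) :
    ‖P.coeff j‖ = ‖P.leadingCoeff‖ * ‖((P.roots.map (X - C ·)).prod).coeff j‖ := by
  conv_lhs => rw [(IsAlgClosed.splits P).eq_prod_roots]
  rw [coeff_C_mul, norm_mul]

variable [IsUltrametricDist k]

theorem supNorm_eq_mul_outsideNormProd (P : k[X]) :
    P.supNorm = ‖P.leadingCoeff‖ * P.roots.outsideNormProd := by
  obtain ⟨hle, heq, -⟩ := P.roots.dominantCoeff_prod_X_sub_C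
  refine le_antisymm ?_ ?_
  · obtain ⟨j, hj⟩ := P.exists_eq_supNorm
    rw [hj, norm_coeff_eq_norm_leadingCoeff_mul]
    exact mul_le_mul_of_nonneg_left (hle j) (norm_nonneg _)
  · rw [← heq, ← norm_coeff_eq_norm_leadingCoeff_mul]
    exact P.le_supNorm _

theorem norm_coeff_card_diskPart_roots (P : k[X]) :
    ‖P.coeff (Multiset.card P.roots.diskPart)‖ = P.supNorm := by
  rw [norm_coeff_eq_norm_leadingCoeff_mul, P.roots.dominantCoeff_prod_X_sub_C.norm_coeff_eq,
    supNorm_eq_mul_outsideNormProd]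

theorem norm_eval_eq_supNorm_mul (P : k[X]) {w : k} (hw : ‖w‖ ≤ 1) :
    ‖P.eval w‖ = P.supNorm * (P.roots.diskPart.map (‖w - ·‖)).prod := by
  conv_lhs => rw [(IsAlgClosed.splits P).eq_prod_roots]
  rw [eval_mul, eval_C, norm_mul, Multiset.norm_eval_prod_X_sub_C _ hw,
    supNorm_eq_mul_outsideNormProd, mul_assoc]

theorem exists_mem_roots_norm_le_one (P : k[X]) {m : ℕ} (hm : ‖P.coeff 0‖ < ‖P.coeff m‖) :
    ∃ z ∈ P.roots, ‖z‖ ≤ 1 := by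
  by_contra! h
  have hdisk : P.roots.diskPart = 0 := Multiset.filter_eq_nil.2 fun z hz => (h z hz).not_ge
  have h0 := P.norm_coeff_card_diskPart_roots
  rw [hdisk, Multiset.card_zero] at h0
  exact (hm.trans_le (h0 ▸ P.le_supNorm m)).false

theorem exists_mem_roots_norm_sub_lt (P : k[X]) {N : ℕ}
    (hN : ∀ j, N < j → ‖P.coeff j‖ < ‖P.coeff 0‖) {w : k} (hw : ‖w‖ ≤ 1) {δ : ℝ} (hδ₀ : 0 ≤ δ)
    (hδ₁ : δ ≤ 1) (hPw : ‖P.eval w‖ < ‖P.coeff 0‖ * δ ^ N) :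
    ∃ z ∈ P.roots, ‖z‖ ≤ 1 ∧ ‖w - z‖ < δ := by
  by_contra! h
  set K := Multiset.card P.roots.diskPart
  have hK : K ≤ N := by
    by_contra! hK
    exact (hN K hK).not_ge (P.norm_coeff_card_diskPart_roots ▸ P.le_supNorm 0)
  have hprod : δ ^ K ≤ (P.roots.diskPart.map (‖w - ·‖)).prod := by
    rw [← Multiset.prod_replicate, ← Multiset.map_const']
    refine Multiset.prod_map_le_prod_map₀ _ _ (fun _ _ => hδ₀) fun z hz => ?_
    obtain ⟨hzP, hz1⟩ := Multiset.mem_filter.1 hz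
    exact h z hzP hz1
  refine hPw.not_ge ?_
  rw [P.norm_eval_eq_supNorm_mul hw]
  calc ‖P.coeff 0‖ * δ ^ N ≤ P.supNorm * δ ^ K :=
        mul_le_mul (P.le_supNorm 0) (pow_le_pow_of_le_one hδ₀ hδ₁ hK) (by positivity)
          P.supNorm_nonneg
    _ ≤ _ := mul_le_mul_of_nonneg_left hprod P.supNorm_nonneg

end Polynomial

end RootsInDisk

section DenseNorms

variable (k : Type*) [NontriviallyNormedField k] [IsAlgClosed k]

theorem exists_norm_mem_Ioo {x y : ℝ} (hx : 0 ≤ x) (hxy : x < y) :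
    ∃ a : k, x < ‖a‖ ∧ ‖a‖ < y := by
  set x' := max x (y / 2)
  have hy : 0 < y := hx.trans_lt hxy
  have hx' : 0 < x' := lt_max_of_lt_right (half_pos hy)
  have hx'y : x' < y := max_lt hxy (half_lt_self hy)
  obtain ⟨c, hc⟩ := NormedField.exists_one_lt_norm k
  obtain ⟨m, hm⟩ := pow_unbounded_of_one_lt ‖c‖ ((one_lt_div hx').2 hx'y)
  have hm0 : m ≠ 0 := by rintro rfl; exact hc.not_ge (by simpa using hm.le)
  -- an `m`-th root `γ` of `c` has norm in `(1, y / x')`, so some power of it lies in `(x, y)`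
  obtain ⟨γ, rfl⟩ := IsAlgClosed.exists_pow_nat_eq c (Nat.pos_of_ne_zero hm0)
  rw [norm_pow] at hc hm
  have hγ : 1 < ‖γ‖ := (one_lt_pow_iff_of_nonneg (norm_nonneg _) hm0).1 hc
  have hγy : ‖γ‖ < y / x' := lt_of_pow_lt_pow_left₀ m (by positivity) hm
  have hγ0 : 0 < ‖γ‖ := one_pos.trans hγ
  obtain ⟨n, hn₁, hn₂⟩ := exists_mem_Ioc_zpow hy hγ
  rw [zpow_add_one₀ hγ0.ne'] at hn₂
  refine ⟨γ ^ n, ?_, by rwa [norm_zpow]⟩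
  rw [norm_zpow]
  calc x ≤ x' := le_max_left _ _
    _ < y / ‖γ‖ := by rw [lt_div_iff₀ hγ0]; rw [lt_div_iff₀ hx'] at hγy; linarith
    _ ≤ ‖γ‖ ^ n := by rw [div_le_iff₀ hγ0]; exact hn₂

lemma frequently_nhdsGT_norm {x : ℝ} (hx : 0 ≤ x) : ∃ᶠ r in 𝓝[>] x, ∃ a : k, ‖a‖ = r := by
  refine frequently_iff.2 fun hU => ?_
  obtain ⟨y, hy, hsub⟩ := mem_nhdsGT_iff_exists_Ioo_subset.1 hU
  obtain ⟨a, ha⟩ := exists_norm_mem_Ioo k hx hy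
  exact ⟨‖a‖, hsub ha, a, rfl⟩

lemma frequently_nhdsLT_norm {x : ℝ} (hx : 0 < x) : ∃ᶠ r in 𝓝[<] x, ∃ a : k, ‖a‖ = r := by
  refine frequently_iff.2 fun hU => ?_
  obtain ⟨l, hl, hsub⟩ := mem_nhdsLT_iff_exists_Ioo_subset.1 hU
  obtain ⟨a, ha₁, ha₂⟩ := exists_norm_mem_Ioo k (le_max_right l 0) (max_lt hl hx)
  exact ⟨‖a‖, hsub ⟨(le_max_left _ _).trans_lt ha₁, ha₂⟩, a, rfl⟩

end DenseNorms

theorem exists_seq_tendsto_of_forall_exists_dist_lt {X : Type*} [PseudoMetricSpace X]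
    [CompleteSpace X] {P : ℕ → X → Prop} {x₀ : X} (h₀ : P 0 x₀)
    (hstep : ∀ j x, P j x → ∃ y, P (j + 1) y ∧ dist x y < (1 / 2) ^ j) :
    ∃ a : ℕ → X, (∀ j, P j (a j)) ∧ ∃ z, Tendsto a atTop (𝓝 z) := by
  choose! g hgP hgdist using hstep
  let a : ℕ → X := fun j => Nat.rec x₀ g j
  have ha : ∀ j, P j (a j) := fun j => by
    induction j with
    | zero => exact h₀
    | succ j ih => exact hgP j _ ih
  refine ⟨a, ha, cauchySeq_tendsto_of_complete (cauchySeq_of_le_geometric (1 / 2) 1 (by norm_num)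
    fun j => ?_)⟩
  rw [one_mul]
  exact (hgdist j _ (ha j)).le

section PowerSeries

lemma hasSum_mul_zero_pow {R : Type*} [Semiring R] [TopologicalSpace R] (b : ℕ → R) :
    HasSum (fun i => b i * 0 ^ i) (b 0) := by
  simpa using hasSum_single (f := fun i => b i * (0 : R) ^ i) 0 fun i hi => by simp [hi]

variable {k : Type*} [NormedField k] [IsUltrametricDist k]

lemma norm_pow_sub_pow_le {x y : k} (hx : ‖x‖ ≤ 1) (hy : ‖y‖ ≤ 1) (n : ℕ) :
    ‖x ^ n - y ^ n‖ ≤ ‖x - y‖ := by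
  rw [← geom_sum₂_mul, norm_mul]
  refine mul_le_of_le_one_left (norm_nonneg _)
    (norm_sum_le_of_forall_le_of_nonneg zero_le_one fun i _ => ?_)
  rw [norm_mul, norm_pow, norm_pow]
  exact mul_le_one₀ (pow_le_one₀ (norm_nonneg _) hx) (by positivity) (pow_le_one₀ (norm_nonneg _) hy)

lemma norm_sum_mul_pow_sub_le {b : ℕ → k} {B : ℝ} (hB : ∀ i, ‖b i‖ ≤ B) {x y : k} (hx : ‖x‖ ≤ 1)
    (hy : ‖y‖ ≤ 1) (n : ℕ) :
    ‖∑ i ∈ Finset.range n, b i * x ^ i - ∑ i ∈ Finset.range n, b i * y ^ i‖ ≤ B * ‖x - y‖ := by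
  have hB0 : 0 ≤ B := (norm_nonneg _).trans (hB 0)
  rw [← Finset.sum_sub_distrib]
  refine norm_sum_le_of_forall_le_of_nonneg (by positivity) fun i _ => ?_
  rw [← mul_sub, norm_mul]
  exact mul_le_mul (hB i) (norm_pow_sub_pow_le hx hy i) (norm_nonneg _) hB0

lemma norm_sum_Ico_mul_pow_lt {b : ℕ → k} {η : ℝ} (hη : 0 < η) {m : ℕ}
    (hb : ∀ i, m ≤ i → ‖b i‖ < η) {x : k} (hx : ‖x‖ ≤ 1) (n : ℕ) :
    ‖∑ i ∈ Finset.Ico m n, b i * x ^ i‖ < η := by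
  refine norm_sum_lt_of_forall_lt hη fun i hi => ?_
  rw [norm_mul, norm_pow]
  exact (mul_le_of_le_one_right (norm_nonneg _) (pow_le_one₀ (norm_nonneg _) hx)).trans_lt
    (hb i (Finset.mem_Ico.1 hi).1)

lemma eq_zero_of_sum_range_eq_zero_of_tendsto {b : ℕ → k} {B : ℝ} (hB : ∀ i, ‖b i‖ ≤ B)
    {z s : k} (hz : ‖z‖ ≤ 1) (hs : HasSum (fun i => b i * z ^ i) s) {N : ℕ → ℕ}
    (hN : Tendsto N atTop atTop) {a : ℕ → k} (ha₁ : ∀ j, ‖a j‖ ≤ 1)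
    (ha : Tendsto a atTop (𝓝 z)) (hroot : ∀ j, ∑ i ∈ Finset.range (N j), b i * a j ^ i = 0) :
    s = 0 := by
  refine tendsto_nhds_unique (hs.tendsto_sum_nat.comp hN) ?_
  rw [tendsto_zero_iff_norm_tendsto_zero]
  refine squeeze_zero (fun _ => norm_nonneg _) (fun j => ?_)
    (by simpa using (tendsto_iff_norm_sub_tendsto_zero.1 ha).const_mul B)
  rw [Function.comp_apply, ← sub_zero (∑ i ∈ _, _), ← hroot j, norm_sub_rev]
  exact norm_sum_mul_pow_sub_le hB (ha₁ j) hz _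

variable [IsAlgClosed k] [CompleteSpace k]

/-- A form of Strassmann's theorem. -/
theorem exists_eq_zero_of_norm_coeff_zero_lt {b : ℕ → k} {S : k → k}
    (hS : ∀ x : k, ‖x‖ ≤ 1 → HasSum (fun i => b i * x ^ i) (S x)) {m : ℕ}
    (hm : ‖b 0‖ < ‖b m‖) : ∃ z : k, ‖z‖ ≤ 1 ∧ S z = 0 := by
  rcases eq_or_ne (b 0) 0 with hb0 | hb0
  · exact ⟨0, by simp, ((hS 0 (by simp)).unique (hasSum_mul_zero_pow b)).trans hb0⟩
  have hb0' : 0 < ‖b 0‖ := norm_pos_iff.2 hb0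
  have hb : Tendsto (fun i => ‖b i‖) atTop (𝓝 0) := by
    simpa using ((hS 1 (by simp)).summable.tendsto_atTop_zero).norm
  obtain ⟨B, hB⟩ := hb.bddAbove_range
  obtain ⟨N, hN⟩ := eventually_atTop.1 (hb.eventually (gt_mem_nhds hb0'))
  have hmN : m < N := lt_of_not_ge fun h => (hN m h).not_gt hm
  obtain ⟨M, hMmono, hM⟩ : ∃ M : ℕ → ℕ, StrictMono M ∧
      ∀ j, N ≤ M j ∧ ∀ i, M j ≤ i → ‖b i‖ < ‖b 0‖ * ((1 / 2) ^ j) ^ N :=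
    extraction_forall_of_eventually fun j => (eventually_ge_atTop N).and
      (eventually_forall_ge_atTop.2 (hb.eventually (gt_mem_nhds (by positivity))))
  set T : ℕ → k[X] := fun j => ∑ i ∈ Finset.range (M j + 1), C (b i) * X ^ i
  have hTcoeff : ∀ j i, (T j).coeff i = if i ∈ Finset.range (M j + 1) then b i else 0 := by
    simp [T]
  have hTeval : ∀ j x, (T j).eval x = ∑ i ∈ Finset.range (M j + 1), b i * x ^ i := by
    simp [T, eval_finsetSum]
  have hT0 : ∀ j, (T j).coeff 0 = b 0 := by simp [hTcoeff]
  have hTN : ∀ j i, N < i → ‖(T j).coeff i‖ < ‖(T j).coeff 0‖ := by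
    intro j i hi
    rw [hT0, hTcoeff]
    split_ifs
    exacts [hN i hi.le, by simpa using hb0']
  have hTm : ‖(T 0).coeff 0‖ < ‖(T 0).coeff m‖ := by
    rwa [hT0, hTcoeff, if_pos (Finset.mem_range.2 (by linarith [(hM 0).1]))]
  obtain ⟨x₀, hx₀, hx₀1⟩ := (T 0).exists_mem_roots_norm_le_one hTm
  -- a root of `T j` nearly annihilates `T (j + 1)`, hence lies close to one of its roots
  obtain ⟨a, ha, z, hz⟩ := exists_seq_tendsto_of_forall_exists_dist_lt
    (P := fun j x => x ∈ (T j).roots ∧ ‖x‖ ≤ 1) ⟨hx₀, hx₀1⟩ fun j x ⟨hx, hx1⟩ => by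
      have hTx : ‖(T (j + 1)).eval x‖ < ‖(T (j + 1)).coeff 0‖ * ((1 / 2) ^ j) ^ N := by
        rw [← sub_zero ((T (j + 1)).eval x), ← (mem_roots'.1 hx).2, hT0, hTeval, hTeval,
          ← Finset.sum_Ico_eq_sub _ (by linarith [hMmono (Nat.lt_succ_self j)])]
        exact norm_sum_Ico_mul_pow_lt (by positivity)
          (fun i hi => (hM j).2 i (by omega)) hx1 _
      obtain ⟨y, hy, hy1, hxy⟩ := (T (j + 1)).exists_mem_roots_norm_sub_lt (hTN _) hx1
        (by positivity) (pow_le_one₀ (by norm_num) (by norm_num)) hTx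
      exact ⟨y, ⟨hy, hy1⟩, by rwa [dist_eq_norm]⟩
  have hz1 : ‖z‖ ≤ 1 := le_of_tendsto hz.norm (Eventually.of_forall fun j => (ha j).2)
  refine ⟨z, hz1, eq_zero_of_sum_range_eq_zero_of_tendsto (fun i => hB ⟨i, rfl⟩) hz1 (hS z hz1)
    ((tendsto_add_atTop_nat 1).comp hMmono.tendsto_atTop) (fun j => (ha j).2) hz fun j => ?_⟩
  rw [Function.comp_apply, ← hTeval]
  exact (mem_roots'.1 (ha j).1).2

theorem norm_coeff_mul_pow_le_of_ne_zero {c : ℕ → k} {u : k → k}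
    (hu : ∀ a : k, ‖a‖ < 1 → HasSum (fun i => c i * a ^ i) (u a))
    (hne : ∀ a : k, ‖a‖ < 1 → u a ≠ 0) {ρ : k} (hρ : ‖ρ‖ < 1) (m : ℕ) :
    ‖c m‖ * ‖ρ‖ ^ m ≤ ‖c 0‖ := by
  by_contra! h
  have hρx : ∀ x : k, ‖x‖ ≤ 1 → ‖ρ * x‖ < 1 := fun x hx => by
    rw [norm_mul]; exact (mul_le_of_le_one_right (norm_nonneg _) hx).trans_lt hρ
  obtain ⟨z, hz, hz0⟩ := exists_eq_zero_of_norm_coeff_zero_lt (b := fun i => c i * ρ ^ i)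
    (S := fun x => u (ρ * x)) (fun x hx => by simpa [mul_pow, mul_assoc] using hu _ (hρx x hx))
    (m := m) (by simpa using h)
  exact hne _ (hρx z hz) hz0

end PowerSeries

theorem norm_eq_norm_coeff_zero_of_ne_zero {k : Type*} [NontriviallyNormedField k]
    [IsUltrametricDist k] [IsAlgClosed k] [CompleteSpace k] {c : ℕ → k} {u : k → k}
    (hu : ∀ a : k, ‖a‖ < 1 → HasSum (fun i => c i * a ^ i) (u a))
    (hne : ∀ a : k, ‖a‖ < 1 → u a ≠ 0) {a : k} (ha : ‖a‖ < 1) : ‖u a‖ = ‖c 0‖ := by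
  have hc0 : 0 < ‖c 0‖ := by
    rw [norm_pos_iff, ← (hu 0 (by simp)).unique (hasSum_mul_zero_pow c)]
    exact hne 0 (by simp)
  obtain ⟨ρ, haρ, hρ⟩ := exists_norm_mem_Ioo k (norm_nonneg a) ha
  have hρ0 : 0 < ‖ρ‖ := (norm_nonneg a).trans_lt haρ
  set q := ‖a‖ / ‖ρ‖
  have hq1 : q < 1 := (div_lt_one hρ0).2 haρ
  have hterm : ∀ i, ‖c (i + 1) * a ^ (i + 1)‖ ≤ ‖c 0‖ * q := fun i => by
    rw [norm_mul, norm_pow, show ‖a‖ = ‖ρ‖ * q by simp only [q]; field_simp, mul_pow,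
      ← mul_assoc]
    refine mul_le_mul (norm_coeff_mul_pow_le_of_ne_zero hu hne hρ _)
      (pow_le_of_le_one (by positivity) hq1.le (Nat.succ_ne_zero i)) (by positivity) hc0.le
  have htail : ‖c 0 - u a‖ < ‖c 0‖ := by
    rw [(hu a ha).tsum_eq.symm, (hu a ha).summable.tsum_eq_zero_add, norm_sub_rev]
    simp only [pow_zero, mul_one, add_sub_cancel_left]
    exact (norm_tsum_le_of_forall_le_of_nonneg (by positivity) hterm).trans_lt
      (mul_lt_of_lt_one_right hc0 hq1)
  simpa using norm_sub_eq_left_of_lt htail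

namespace AnalyticDiskMap

variable {k : Type*} [NontriviallyNormedField k] [IsUltrametricDist k] [IsAlgClosed k]

theorem eq_one_of_norm_apply_eq_mul_prod {ι : Type*} [Fintype ι] (f : AnalyticDiskMap k)
    {β : ι → k} (hβ : ∀ i, ‖β i‖ < 1) {c : ℝ} (hc : 0 ≤ c)
    (h : ∀ a : k, ‖a‖ < 1 → ‖f.toFun a‖ = c * ∏ i, ‖a - β i‖) : c = 1 := by
  refine le_antisymm ?_ ?_
  · -- near the boundary `‖f a‖ = c * ‖a‖ ^ card ι`, which must stay below `1`
    by_contra! hc1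
    have hlim : Tendsto (fun r : ℝ => c * r ^ Fintype.card ι) (𝓝[<] 1) (𝓝 c) := by
      refine (Continuous.tendsto' ?_ 1 c (by simp)).mono_left nhdsWithin_le_nhds
      fun_prop
    obtain ⟨r, ⟨⟨hr1, hrc⟩, hrβ⟩, a, rfl⟩ := (((eventually_mem_nhdsWithin.and
      (hlim.eventually (lt_mem_nhds hc1))).and
      (eventually_all.2 fun i => Ioo_mem_nhdsLT (hβ i))).and_frequently
      (frequently_nhdsLT_norm k one_pos)).exists
    have hfa : ‖f.toFun a‖ = c * ‖a‖ ^ Fintype.card ι := by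
      rw [h a hr1, ← Finset.card_univ, ← Finset.prod_const]
      exact congrArg _ (Finset.prod_congr rfl fun i _ => norm_sub_eq_left_of_lt (hrβ i).1)
    exact (f.maps_disk a hr1).not_ge (hfa ▸ hrc.le)
  · by_contra! hc1
    obtain ⟨b, hcb, hb1⟩ := exists_norm_mem_Ioo k hc hc1
    obtain ⟨a, ha, rfl⟩ := f.surj b hb1
    refine hcb.not_ge ?_
    rw [h a ha]
    exact mul_le_of_le_one_right hc (Finset.prod_le_one (fun _ _ => norm_nonneg _)
      fun i _ => (norm_sub_le_max _ _).trans (max_le ha.le (hβ i).le))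

theorem norm_apply_eq_prod [CompleteSpace k] {ι : Type*} [Fintype ι] (f : AnalyticDiskMap k)
    {β : ι → k} (hβ : ∀ i, ‖β i‖ < 1)
    (hfact : ∃ u : k → k,
      (∃ uc : ℕ → k, ∀ a : k, ‖a‖ < 1 → HasSum (fun m => uc m * a ^ m) (u a)) ∧
      (∀ a : k, ‖a‖ < 1 → u a ≠ 0) ∧
      (∀ a : k, ‖a‖ < 1 → f.toFun a = (∏ i, (a - β i)) * u a))
    {a : k} (ha : ‖a‖ < 1) : ‖f.toFun a‖ = ∏ i, ‖a - β i‖ := by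
  obtain ⟨u, ⟨uc, hu⟩, hne, hfu⟩ := hfact
  have hnorm : ∀ a : k, ‖a‖ < 1 → ‖f.toFun a‖ = ‖uc 0‖ * ∏ i, ‖a - β i‖ := fun a ha => by
    rw [hfu a ha, norm_mul, norm_prod, norm_eq_norm_coeff_zero_of_ne_zero hu hne ha, mul_comm]
  rw [hnorm a ha, f.eq_one_of_norm_apply_eq_mul_prod hβ (norm_nonneg _) hnorm, one_mul]

end AnalyticDiskMap

section Profile

lemma eventually_nhdsGT_ite_lt {ι : Type*} [Finite ι] (v : ι → ℝ) (x : ℝ) :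
    ∀ᶠ r in 𝓝[>] x, ∀ i, if v i ≤ x then v i < r else r < v i :=
  eventually_all.2 fun i => by
    split_ifs with h
    · exact eventually_nhdsWithin_of_forall fun r hr => h.trans_lt hr
    · filter_upwards [Ioo_mem_nhdsGT (not_le.1 h)] with r hr using hr.2

theorem eventually_profile_eq {k : Type*} [NormedField k] [IsUltrametricDist k] {ι : Type*}
    [Fintype ι] {F : k → k} {β : ι → k} (hF : ∀ a : k, ‖a‖ < 1 → ‖F a‖ = ∏ i, ‖a - β i‖)
    {f₀ : ℝ → ℝ} (hcompat : ∀ a : k, 0 < ‖a‖ → ‖a‖ < 1 → (∀ i, ‖a‖ ≠ ‖β i‖) →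
      f₀ (-Real.log ‖a‖) = -Real.log ‖F a‖)
    {x : ℝ} (hx₀ : 0 ≤ x) (hx₁ : x < 1) :
    ∀ᶠ r in 𝓝[>] x, ∀ a : k, ‖a‖ = r →
      f₀ (-Real.log r) = ((Finset.univ.filter fun i => ‖β i‖ ≤ x).card : ℝ) * (-Real.log r) +
        ∑ i ∈ Finset.univ.filter fun i => x < ‖β i‖, (-Real.log ‖β i‖) := by
  filter_upwards [eventually_nhdsGT_ite_lt (‖β ·‖) x, Ioo_mem_nhdsGT hx₁] with r hr hr₁ a rfl
  have ha₀ : 0 < ‖a‖ := hx₀.trans_lt hr₁.1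
  have hsub : ∀ i, ‖a - β i‖ = if ‖β i‖ ≤ x then ‖a‖ else ‖β i‖ := fun i => by
    have := hr i
    split_ifs at this ⊢
    · exact norm_sub_eq_left_of_lt this
    · rw [norm_sub_rev]; exact norm_sub_eq_left_of_lt this
  have hlog : ∀ i, -Real.log ‖a - β i‖ =
      if ‖β i‖ ≤ x then -Real.log ‖a‖ else -Real.log ‖β i‖ := fun i => by
    rw [hsub]; split_ifs <;> rfl
  have hne : ∀ i, ‖a‖ ≠ ‖β i‖ := fun i => by
    have := hr i
    split_ifs at this
    exacts [this.ne', this.ne]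
  rw [hcompat a ha₀ hr₁.2 hne, hF a hr₁.2, Real.log_prod fun i _ => ?_, ← Finset.sum_neg_distrib]
  · simp only [hlog, Finset.sum_ite, Finset.sum_const, nsmul_eq_mul, not_le]
  · rw [hsub]
    split_ifs with h
    exacts [ha₀.ne', (hx₀.trans_lt (not_le.1 h)).ne']

lemma eq_and_eq_of_affine_eq_affine {s₁ s₂ d α d' α' : ℝ} (hs : s₁ ≠ s₂)
    (h₁ : d * s₁ + α = d' * s₁ + α') (h₂ : d * s₂ + α = d' * s₂ + α') : d = d' ∧ α = α' := by
  have hd : d = d' := mul_right_cancel₀ (sub_ne_zero.2 hs) (by linear_combination h₁ - h₂)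
  exact ⟨hd, by subst hd; linarith⟩

theorem eq_and_eq_of_eventually_nhdsGT_affine {k : Type*} [NontriviallyNormedField k]
    [IsAlgClosed k] {g : ℝ → ℝ} {x d α d' α' : ℝ} (hx : 0 ≤ x)
    (h : ∀ᶠ r in 𝓝[>] x, ∀ a : k, ‖a‖ = r → g (-Real.log r) = d * (-Real.log r) + α)
    (h' : ∀ᶠ r in 𝓝[>] x, ∀ a : k, ‖a‖ = r → g (-Real.log r) = d' * (-Real.log r) + α') :
    d = d' ∧ α = α' := by
  have hev := h.and h'
  obtain ⟨_, ⟨⟨h₁, h₁'⟩, hr₁⟩, a₁, rfl⟩ :=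
    ((hev.and eventually_mem_nhdsWithin).and_frequently (frequently_nhdsGT_norm k hx)).exists
  obtain ⟨_, ⟨⟨h₂, h₂'⟩, hr₂⟩, a₂, rfl⟩ :=
    ((hev.and (Ioo_mem_nhdsGT hr₁)).and_frequently (frequently_nhdsGT_norm k hx)).exists
  refine eq_and_eq_of_affine_eq_affine ?_ ((h₁ a₁ rfl).symm.trans (h₁' a₁ rfl))
    ((h₂ a₂ rfl).symm.trans (h₂' a₂ rfl))
  exact fun h => (Real.log_lt_log (hx.trans_lt hr₂.1) hr₂.2).ne' (neg_inj.1 h)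

lemma sum_filter_pos_eq_add {ι : Type*} [Fintype ι] (v g : ι → ℝ) {x : ℝ} (hx : 0 ≤ x) :
    ∑ i ∈ Finset.univ.filter (fun i => 0 < v i), g i =
      ∑ i ∈ Finset.univ.filter (fun i => 0 < v i ∧ v i ≤ x), g i +
        ∑ i ∈ Finset.univ.filter (fun i => x < v i), g i := by
  rw [← Finset.sum_filter_add_sum_filter_not _ (fun i => v i ≤ x), Finset.filter_filter,
    Finset.filter_filter]
  congr 1
  refine Finset.sum_congr (Finset.filter_congr fun i _ => ?_) fun _ _ => rfl
  exact ⟨fun h => not_le.1 h.2, fun h => ⟨hx.trans_lt h, not_le.2 h⟩⟩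

end Profile

theorem backward_branching_determines_profile_general
    (k : Type*) [NontriviallyNormedField k] [IsUltrametricDist k]
    [IsAlgClosed k] [CompleteSpace k]
    (f : AnalyticDiskMap k) (n : ℕ) (β : Fin (n + 1) → k)
    (hβ : ∀ i, ‖β i‖ < 1)
    (hfact : ∃ u : k → k,
      (∃ uc : ℕ → k, ∀ a : k, ‖a‖ < 1 → HasSum (fun m => uc m * a ^ m) (u a)) ∧
      (∀ a : k, ‖a‖ < 1 → u a ≠ 0) ∧
      (∀ a : k, ‖a‖ < 1 → f.toFun a = (∏ i, (a - β i)) * u a))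
    -- the profile function `f₀` of `f`:
    (f₀ : ℝ → ℝ)
    (hcompat : ∀ a : k, 0 < ‖a‖ → ‖a‖ < 1 → (∀ i, ‖a‖ ≠ ‖β i‖) →
      f₀ (-Real.log ‖a‖) = -Real.log ‖f.toFun a‖)
    (t : ℝ) (ht : 0 < t)
    -- `f₀(s) = d·s + α` on the linearity piece containing `t` (larger-radii side):
    (d α : ℝ)
    (hpiece : ∃ ε > 0, ∀ s : ℝ, t - ε < s → s ≤ t → f₀ s = d * s + α)
    -- `f₀(s) = s + α_max` near `s = ∞` (slope `1`):
    (αmax : ℝ)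
    (hbig : ∃ M : ℝ, 0 < M ∧ ∀ s : ℝ, M ≤ s → f₀ s = s + αmax) :
    -- `B(t)` = zeros in the closed ball of radius `exp(-t)`; then the slope is
    -- `card B(t)` and the intercept drops from `α_max` by the sum of the valuations
    -- of the nonzero merged zeros:
    d = ((Finset.univ.filter fun i => ‖β i‖ ≤ Real.exp (-t)).card : ℝ) ∧
    αmax = ∑ i ∈ Finset.univ.filter fun i => 0 < ‖β i‖, (-Real.log ‖β i‖) ∧
    α = αmax -
      ∑ i ∈ Finset.univ.filter fun i => 0 < ‖β i‖ ∧ ‖β i‖ ≤ Real.exp (-t),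
        (-Real.log ‖β i‖) := by
  have hprofile := fun x (hx₀ : 0 ≤ x) (hx₁ : x < 1) => eventually_profile_eq
    (fun a ha => f.norm_apply_eq_prod hβ hfact ha) hcompat hx₀ hx₁
  obtain ⟨ε, hε, hpiece⟩ := hpiece
  obtain ⟨M, -, hbig⟩ := hbig
  have hnear_t : ∀ᶠ r in 𝓝[>] Real.exp (-t), ∀ a : k, ‖a‖ = r →
      f₀ (-Real.log r) = d * (-Real.log r) + α := by
    filter_upwards [Ioo_mem_nhdsGT (Real.exp_lt_exp.2 (by linarith : -t < -(t - ε)))]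
      with r hr a _
    have h₁ := Real.log_lt_log (Real.exp_pos _) hr.1
    have h₂ := Real.log_lt_log ((Real.exp_pos _).trans hr.1) hr.2
    rw [Real.log_exp] at h₁ h₂
    exact hpiece _ (by linarith) (by linarith)
  have hnear_0 : ∀ᶠ r in 𝓝[>] 0, ∀ a : k, ‖a‖ = r →
      f₀ (-Real.log r) = 1 * (-Real.log r) + αmax := by
    filter_upwards [Ioo_mem_nhdsGT (Real.exp_pos (-M))] with r hr a _
    have h := Real.log_lt_log hr.1 hr.2
    rw [Real.log_exp] at h
    rw [one_mul]
    exact hbig _ (by linarith)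
  obtain ⟨hd, hα⟩ := eq_and_eq_of_eventually_nhdsGT_affine (Real.exp_pos _).le hnear_t
    (hprofile _ (Real.exp_pos _).le (Real.exp_lt_one_iff.2 (neg_lt_zero.2 ht)))
  obtain ⟨-, hαmax⟩ :=
    eq_and_eq_of_eventually_nhdsGT_affine le_rfl hnear_0 (hprofile 0 le_rfl one_pos)
  refine ⟨hd, hαmax, ?_⟩
  rw [hα, hαmax, sum_filter_pos_eq_add _ _ (Real.exp_pos (-t)).le]
  ring

theorem backward_branching_determines_profile
    (k : Type*) [NontriviallyNormedField k] [IsUltrametricDist k]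
    [IsAlgClosed k] [CompleteSpace k]
    (f : AnalyticDiskMap k) (n : ℕ) (β : Fin (n + 1) → k)
    (hβ0 : β 0 = 0) (hβ : ∀ i, ‖β i‖ < 1)
    -- `f` is étale, so all the zeros are simple:
    (hinj : Function.Injective β)
    (hzeros : ∀ a : k, ‖a‖ < 1 → (f.toFun a = 0 ↔ ∃ i, a = β i))
    (hfact : ∃ u : k → k,
      (∃ uc : ℕ → k, ∀ a : k, ‖a‖ < 1 → HasSum (fun m => uc m * a ^ m) (u a)) ∧
      (∀ a : k, ‖a‖ < 1 → u a ≠ 0) ∧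
      (∀ a : k, ‖a‖ < 1 → f.toFun a = (∏ i, (a - β i)) * u a))
    -- the profile function `f₀` of `f`:
    (f₀ : ℝ → ℝ) (hcont : ContinuousOn f₀ (Set.Ioi 0))
    (hcompat : ∀ a : k, 0 < ‖a‖ → ‖a‖ < 1 → (∀ i, ‖a‖ ≠ ‖β i‖) →
      f₀ (-Real.log ‖a‖) = -Real.log ‖f.toFun a‖)
    (t : ℝ) (ht : 0 < t)
    -- `f₀(s) = d·s + α` on the linearity piece containing `t` (larger-radii side):
    (d α : ℝ)
    (hpiece : ∃ ε > 0, ∀ s : ℝ, t - ε < s → s ≤ t → f₀ s = d * s + α)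
    -- `f₀(s) = s + α_max` near `s = ∞` (slope `1`):
    (αmax : ℝ)
    (hbig : ∃ M : ℝ, 0 < M ∧ ∀ s : ℝ, M ≤ s → f₀ s = s + αmax) :
    -- `B(t)` = zeros in the closed ball of radius `exp(-t)`; then the slope is
    -- `card B(t)` and the intercept drops from `α_max` by the sum of the valuations
    -- of the nonzero merged zeros:
    d = ((Finset.univ.filter fun i => ‖β i‖ ≤ Real.exp (-t)).card : ℝ) ∧
    αmax = ∑ i ∈ Finset.univ.filter fun i => 0 < ‖β i‖, (-Real.log ‖β i‖) ∧
    α = αmax -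
      ∑ i ∈ Finset.univ.filter fun i => 0 < ‖β i‖ ∧ ‖β i‖ ≤ Real.exp (-t),
        (-Real.log ‖β i‖) :=
  backward_branching_determines_profile_general k f n β hβ hfact f₀ hcompat t ht d α hpiece αmax
    hbig
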